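/- Let p be a prime, n ≥ 1, and take all shift parameters b_i = 1, so 𝔟(s) = s, b = p^n + 1, and for 2 ≤ h ≤ p^n set m = h − 1 and d(s) = ⌊(1 + p^n + s − h)/p^n⌋, i.e., d(s) = 1 if s ≥ m and d(s) = 0 if s < m. Define w(s) = min{d(u) − d(u−s) : s ⪯ u}. Then w(s) = 1 if s ≥ max(m, p^n − m) and w(s) = 0 otherwise. -/

import Mathlib

/-- The `i`-th base-`p` digit of `s`. -/
def dig (p s i : ℕ) : ℕ := s / p ^ i % p

/-- Digitwise partial order on base-`p` expansions: `s ⪯ t`. -/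
def preceq (p s t : ℕ) : Prop := ∀ i, dig p s i ≤ dig p t i

/-- Weakly ramified case (all shift parameters `1`): `d(s) = ⌊(1 + p^n + s − h)/p^n⌋`. -/
def dfun (p n h : ℕ) (s : ℕ) : ℤ :=
  Int.fdiv (1 + (p : ℤ) ^ n + s - h) ((p : ℤ) ^ n)

/-- `w(s) = min { d(u) − d(u−s) : u ∈ {0,…,p^n−1}, s ⪯ u }`. -/
noncomputable def wfun (p n h : ℕ) (s : ℕ) : ℤ :=
  sInf ((fun u => dfun p n h u - dfun p n h (u - s)) ''
    {u : ℕ | u < p ^ n ∧ preceq p s u})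

/-!
On `s < p ^ n` the function `d` is the indicator of `h - 1 ≤ s`, so `d u - d (u - s)` is `1` when
`u - s < h - 1 ≤ u` and `0` otherwise. Every `u ⪰ s` lies between `s` and `p ^ n - 1`, and both
extremes are attained; so the minimum is `1` exactly when `h - 1 ≤ s` and `p ^ n - 1 - s < h - 1`.
-/

theorem mod_pow_le_mod_pow_of_preceq {p s u : ℕ} (hsu : preceq p s u) (k : ℕ) :
    s % p ^ k ≤ u % p ^ k := by
  induction k with
  | zero => simp only [pow_zero, Nat.mod_one, le_refl]
  | succ k ih =>
    rw [Nat.mod_pow_succ, Nat.mod_pow_succ]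
    exact Nat.add_le_add ih (Nat.mul_le_mul_left _ (hsu k))

theorem le_of_preceq {p s u : ℕ} (hp : 1 < p) (hsu : preceq p s u) : s ≤ u := by
  have hk := mod_pow_le_mod_pow_of_preceq hsu (s + u)
  have hlt : s + u < p ^ (s + u) := Nat.lt_pow_self hp
  rwa [Nat.mod_eq_of_lt (by omega), Nat.mod_eq_of_lt (by omega)] at hk

theorem dig_pow_sub_one {p n i : ℕ} (hp : 0 < p) (hi : i < n) :
    dig p (p ^ n - 1) i = p - 1 := by
  obtain ⟨k, rfl⟩ : ∃ k, n = i + 1 + k := ⟨n - (i + 1), by omega⟩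
  have hpi : 0 < p ^ i := by positivity
  have hpk : 0 < p ^ k := by positivity
  have hsplit : p ^ (i + 1 + k) - 1 = p ^ i * (p * (p ^ k - 1) + (p - 1)) + (p ^ i - 1) := by
    have : 0 < p ^ i * p * p ^ k := by positivity
    rw [pow_add, pow_succ]
    zify [hp, hpi, hpk, this]
    ring
  rw [dig, hsplit, Nat.mul_add_div hpi, Nat.div_eq_of_lt (Nat.sub_lt hpi one_pos), add_zero,
    Nat.mul_add_mod, Nat.mod_eq_of_lt (Nat.sub_lt hp one_pos)]

theorem preceq_pow_sub_one {p n s : ℕ} (hp : 0 < p) (hs : s < p ^ n) :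
    preceq p s (p ^ n - 1) := by
  intro i
  rcases lt_or_ge i n with hi | hi
  · rw [dig_pow_sub_one hp hi]
    exact Nat.le_sub_one_of_lt (Nat.mod_lt _ hp)
  · have : s < p ^ i := hs.trans_le (Nat.pow_le_pow_right hp hi)
    simp [dig, Nat.div_eq_of_lt this]

theorem dfun_eq_ite {p n h s : ℕ} (hh1 : 1 ≤ h) (hh2 : h ≤ p ^ n + 1) (hs : s < p ^ n) :
    dfun p n h s = if h - 1 ≤ s then 1 else 0 := by
  have hs' : (s : ℤ) < (p : ℤ) ^ n := by exact_mod_cast hs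
  have hh2' : (h : ℤ) ≤ (p : ℤ) ^ n + 1 := by exact_mod_cast hh2
  have hN : (0 : ℤ) < (p : ℤ) ^ n := by omega
  rw [dfun, Int.fdiv_eq_ediv_of_nonneg _ hN.le]
  split_ifs with hc
  · have hsplit : 1 + (p : ℤ) ^ n + s - h = (s + 1 - h) + (p : ℤ) ^ n * 1 := by ring
    rw [hsplit, Int.add_mul_ediv_left _ _ hN.ne', Int.ediv_eq_zero_of_lt (by omega) (by omega),
      zero_add]
  · exact Int.ediv_eq_zero_of_lt (by omega) (by omega)

theorem dfun_sub_dfun_tsub {p n h s u : ℕ} (hh1 : 1 ≤ h) (hh2 : h ≤ p ^ n + 1)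
    (hu : u < p ^ n) :
    dfun p n h u - dfun p n h (u - s) = if u - s < h - 1 ∧ h - 1 ≤ u then 1 else 0 := by
  rw [dfun_eq_ite hh1 hh2 hu, dfun_eq_ite hh1 hh2 (by omega)]
  split_ifs <;> omega

theorem stmt_10_general (p n : ℕ) (h : ℕ)
    (hh1 : 2 ≤ h) (hh2 : h ≤ p ^ n) :
    ∀ s : ℕ, s < p ^ n →
      wfun p n h s = if max (h - 1) (p ^ n - (h - 1)) ≤ s then 1 else 0 := by
  intro s hs
  have hp : 1 < p := lt_of_pow_lt_pow_left₀ n (Nat.zero_le _) (by rw [one_pow]; omega)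
  have htop : p ^ n - 1 < p ^ n ∧ preceq p s (p ^ n - 1) :=
    ⟨by omega, preceq_pow_sub_one (by omega) hs⟩
  have hval : ∀ u < p ^ n, dfun p n h u - dfun p n h (u - s)
      = if u - s < h - 1 ∧ h - 1 ≤ u then 1 else 0 :=
    fun u hu => dfun_sub_dfun_tsub (by omega) (by omega) hu
  apply IsLeast.csInf_eq
  split_ifs with hc
  · refine ⟨⟨p ^ n - 1, htop, (hval _ htop.1).trans (if_pos (by omega))⟩, ?_⟩
    rintro _ ⟨u, ⟨hu, hsu⟩, rfl⟩
    have hsu_le : s ≤ u := le_of_preceq hp hsu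
    exact ((hval u hu).trans (if_pos (by omega))).ge
  · refine ⟨?_, ?_⟩
    · by_cases hsm : h - 1 ≤ s
      · exact ⟨p ^ n - 1, htop, (hval _ htop.1).trans (if_neg (by omega))⟩
      · exact ⟨s, ⟨hs, fun _ => le_rfl⟩, (hval _ hs).trans (if_neg (by omega))⟩
    · rintro _ ⟨u, ⟨hu, -⟩, rfl⟩
      dsimp only
      rw [hval u hu]
      split_ifs <;> omega

theorem stmt_10 (p n : ℕ) (hp : p.Prime) (hn : 1 ≤ n) (h : ℕ)
    (hh1 : 2 ≤ h) (hh2 : h ≤ p ^ n) :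
    ∀ s : ℕ, s < p ^ n →
      wfun p n h s = if max (h - 1) (p ^ n - (h - 1)) ≤ s then 1 else 0 :=
  stmt_10_general p n h hh1 hh2
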